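/- Let α > 0, κ > 0 and β, η ∈ ℝ, and define g(d) = log(1 + αd) + (καd² − (β+η)d)/(1 + αd) for real d with 1 + αd > 0. If 4κ(κ + β + η) + α² ≤ 0, then g is monotone nondecreasing on the interval (−1/α, ∞). -/

import Mathlib

/-!
On `1 + α d > 0` the derivative of `g` is `q(d) / (1 + α d)²` with the quadratic
`q(d) = κα² d² + (α² + 2κα) d + (α − (β + η))`. Its discriminant is
`α² (α² + 4κ(κ + β + η))`, so under the hypothesis `q` has positive leading coefficient and
nonpositive discriminant, hence `q ≥ 0` and `g' ≥ 0` on the convex open set `(−1/α, ∞)`.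
-/

open Set

theorem quadratic_nonneg_of_discrim_nonpos {K : Type*} [Field K] [LinearOrder K]
    [IsStrictOrderedRing K] {a b c : K} (ha : 0 < a) (h : discrim a b c ≤ 0) (x : K) :
    0 ≤ a * (x * x) + b * x + c := by
  have hsq : 4 * a * (a * (x * x) + b * x + c) = (2 * a * x + b) ^ 2 - discrim a b c := by
    rw [discrim]; ring
  have h4a : 0 < 4 * a := by positivity
  refine (mul_nonneg_iff_of_pos_left h4a).mp ?_
  rw [hsq]
  nlinarith [sq_nonneg (2 * a * x + b)]

theorem monotoneOn_of_hasDerivAt_nonneg_of_isOpen {D : Set ℝ} (hD : Convex ℝ D) (hDo : IsOpen D)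
    {f f' : ℝ → ℝ} (hf : ∀ x ∈ D, HasDerivAt f (f' x) x) (hf' : ∀ x ∈ D, 0 ≤ f' x) :
    MonotoneOn f D :=
  monotoneOn_of_hasDerivWithinAt_nonneg hD
    (fun x hx => (hf x hx).continuousAt.continuousWithinAt)
    (by rw [hDo.interior_eq]; exact fun x hx => (hf x hx).hasDerivWithinAt)
    (by rw [hDo.interior_eq]; exact hf')

/-- The increment `g` of the coordinate objective, with `c = β + η`. -/
noncomputable def coordIncrement (α κ c d : ℝ) : ℝ :=
  Real.log (1 + α * d) + (κ * α * d ^ 2 - c * d) / (1 + α * d)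

theorem hasDerivAt_coordIncrement {α κ c d : ℝ} (hd : 0 < 1 + α * d) :
    HasDerivAt (coordIncrement α κ c)
      ((κ * α ^ 2 * (d * d) + (α ^ 2 + 2 * κ * α) * d + (α - c)) / (1 + α * d) ^ 2) d := by
  have hden : HasDerivAt (fun x : ℝ => 1 + α * x) α d := by
    simpa using ((hasDerivAt_id d).const_mul α).const_add 1
  have hnum := ((hasDerivAt_pow 2 d).const_mul (κ * α)).sub ((hasDerivAt_id d).const_mul c)
  refine ((hden.log hd.ne').add (hnum.div hden hd.ne')).congr_deriv ?_
  simp only [Pi.sub_apply, id_eq, Nat.cast_ofNat, Nat.add_one_sub_one, pow_one, mul_one]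
  field_simp
  ring

theorem coordIncrement_deriv_numerator_nonneg {α κ c : ℝ} (hα : α ≠ 0) (hκ : 0 < κ)
    (h : 4 * κ * (κ + c) + α ^ 2 ≤ 0) (d : ℝ) :
    0 ≤ κ * α ^ 2 * (d * d) + (α ^ 2 + 2 * κ * α) * d + (α - c) := by
  refine quadratic_nonneg_of_discrim_nonpos (by positivity) ?_ d
  have hdiscrim : discrim (κ * α ^ 2) (α ^ 2 + 2 * κ * α) (α - c)
      = α ^ 2 * (4 * κ * (κ + c) + α ^ 2) := by
    rw [discrim]; ring
  rw [hdiscrim]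
  exact mul_nonpos_of_nonneg_of_nonpos (sq_nonneg α) h

theorem stmt_2 (α κ β η : ℝ) (hα : 0 < α) (hκ : 0 < κ)
    (h : 4 * κ * (κ + β + η) + α ^ 2 ≤ 0) :
    MonotoneOn
      (fun d : ℝ => Real.log (1 + α * d) + (κ * α * d ^ 2 - (β + η) * d) / (1 + α * d))
      (Set.Ioi (-(1 / α))) := by
  have hpos : ∀ d ∈ Ioi (-(1 / α)), 0 < 1 + α * d := fun d hd => by
    have := mul_lt_mul_of_pos_left (mem_Ioi.mp hd) hα
    rw [mul_neg, mul_one_div_cancel hα.ne'] at this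
    linarith
  have h' : 4 * κ * (κ + (β + η)) + α ^ 2 ≤ 0 := by linarith
  exact monotoneOn_of_hasDerivAt_nonneg_of_isOpen (convex_Ioi _) isOpen_Ioi
    (fun d hd => hasDerivAt_coordIncrement (hpos d hd))
    (fun d hd => div_nonneg (coordIncrement_deriv_numerator_nonneg hα.ne' hκ h' d)
      (sq_nonneg _))
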